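/- arXiv:2007.09526 — 4 statements merged into one kernel-verified Lean document; each statement's English description precedes it below -/
import Mathlib

section
/- Let H be a bialgebra over a field k, R a right H-module algebra with augmentation ε_R : R → k, and f ∈ R. Suppose p ∈ H* satisfies p(h) = ε_R(f · h) for all h ∈ H, and that dim_k (Ker ε_R)/(Ker ε_R)² = N is finite. Then the subspace P(H) ▷ p = span{ h ▷ p : h ∈ P(H) } of H* has dimension at most N, where (h ▷ p)(x) = p(xh). -/
open TensorProduct

/-!
For a primitive `h`, the functional `a ↦ ε_R (a · h)` is a derivation of `R` at the point `ε_R`.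
A point derivation kills `1` and `(ker ε_R)²`, so it factors through the cotangent space
`(ker ε_R)/(ker ε_R)²`. Since `(h ▷ p)(x) = ε_R ((f · x) · h)`, every `h ▷ p` is then the pullback
of a functional on that `N`-dimensional space along one fixed linear map `x ↦ [f · x]`.
-/

section PointDerivation

variable {k R : Type*} [Field k] [Ring R] [Algebra k R] (ε : R →ₐ[k] k)

abbrev CotangentSpace : Type _ :=
  LinearMap.ker ε.toLinearMap ⧸ Submodule.comap (LinearMap.ker ε.toLinearMap).subtype
    (Submodule.span k {x : R | ∃ a ∈ LinearMap.ker ε.toLinearMap,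
      ∃ b ∈ LinearMap.ker ε.toLinearMap, x = a * b})

def cotangentProj : R →ₗ[k] CotangentSpace ε :=
  Submodule.mkQ _ ∘ₗ LinearMap.codRestrict (LinearMap.ker ε.toLinearMap)
    (LinearMap.id - Algebra.linearMap k R ∘ₗ ε.toLinearMap) (fun a => by simp)

def IsPointDerivation (L : R →ₗ[k] k) : Prop :=
  ∀ a b, L (a * b) = ε a * L b + L a * ε b

variable {ε} {L : R →ₗ[k] k}

theorem IsPointDerivation.map_one (hL : IsPointDerivation ε L) : L 1 = 0 := by
  simpa using hL 1 1

theorem IsPointDerivation.map_algebraMap (hL : IsPointDerivation ε L) (c : k) :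
    L (algebraMap k R c) = 0 := by
  rw [Algebra.algebraMap_eq_smul_one, map_smul, hL.map_one, smul_zero]

theorem IsPointDerivation.eq_zero_of_mem_span_mul (hL : IsPointDerivation ε L) {x : R}
    (hx : x ∈ Submodule.span k {x : R | ∃ a ∈ LinearMap.ker ε.toLinearMap,
      ∃ b ∈ LinearMap.ker ε.toLinearMap, x = a * b}) : L x = 0 := by
  induction hx using Submodule.span_induction with
  | mem x hx =>
    obtain ⟨a, ha, b, hb, rfl⟩ := hx
    rw [LinearMap.mem_ker, AlgHom.toLinearMap_apply] at ha hb
    rw [hL a b, ha, hb, zero_mul, mul_zero, add_zero]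
  | zero => simp
  | add x y _ _ hx hy => rw [map_add, hx, hy, add_zero]
  | smul c x _ hx => rw [map_smul, hx, smul_zero]

theorem IsPointDerivation.exists_comp_cotangentProj (hL : IsPointDerivation ε L) :
    ∃ g : CotangentSpace ε →ₗ[k] k, g ∘ₗ cotangentProj ε = L := by
  refine ⟨Submodule.liftQ _ (L ∘ₗ Submodule.subtype _) fun x hx =>
    LinearMap.mem_ker.2 (hL.eq_zero_of_mem_span_mul hx), LinearMap.ext fun a => ?_⟩
  change L (a - algebraMap k R (ε a)) = L a
  rw [map_sub, hL.map_algebraMap, sub_zero]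

end PointDerivation

theorem isPointDerivation_comp_act_of_primitive {k H R : Type*} [Field k] [Ring H]
    [Bialgebra k H] [Ring R] [Algebra k R] (act : R →ₗ[k] H →ₗ[k] R)
    (hone : ∀ a, act a 1 = a)
    (hmeas : ∀ a b h, act (a * b) h =
      LinearMap.mul' k R (TensorProduct.map (act a) (act b) (Coalgebra.comul (R := k) h)))
    (ε : R →ₐ[k] k) {h : H} (hh : Coalgebra.comul (R := k) h = 1 ⊗ₜ[k] h + h ⊗ₜ[k] 1) :
    IsPointDerivation ε (ε.toLinearMap ∘ₗ act.flip h) := by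
  intro a b
  simp [hmeas a b h, hh, hone]

theorem Submodule.rank_le_finrank_of_le_range_dualMap {k V W : Type*} [Field k]
    [AddCommGroup V] [Module k V] [AddCommGroup W] [Module k W] [Module.Finite k V]
    (ψ : W →ₗ[k] V) {S : Submodule k (Module.Dual k W)} (hS : S ≤ LinearMap.range ψ.dualMap) :
    Module.rank k S ≤ Module.finrank k V := by
  calc Module.rank k S ≤ Module.rank k (LinearMap.range ψ.dualMap) := Submodule.rank_mono hS
    _ = Module.finrank k (LinearMap.range ψ.dualMap) := (Module.finrank_eq_rank k _).symm
    _ ≤ Module.finrank k V := by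
      exact_mod_cast ψ.dualMap.finrank_range_le.trans Subspace.dual_finrank_eq.le

theorem lie_rank_le_of_differentially_produced_general {k H R : Type*} [Field k]
    [Ring H] [Bialgebra k H] [Ring R] [Algebra k R]
    (act : R →ₗ[k] H →ₗ[k] R)
    (hone : ∀ a, act a 1 = a)
    (hassoc : ∀ a h h', act a (h * h') = act (act a h) h')
    (hmeas : ∀ a b h, act (a * b) h =
      LinearMap.mul' k R (TensorProduct.map (act a) (act b) (Coalgebra.comul (R := k) h)))
    (εR : R →ₐ[k] k)
    (I : Submodule k R) (hI : I = LinearMap.ker εR.toLinearMap)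
    (I2 : Submodule k R)
    (hI2 : I2 = Submodule.span k {x : R | ∃ a ∈ I, ∃ b ∈ I, x = a * b})
    (N : ℕ)
    (hfin : Module.Finite k (I ⧸ Submodule.comap I.subtype I2))
    (hdim : Module.finrank k (I ⧸ Submodule.comap I.subtype I2) = N)
    (f : R) (p : H →ₗ[k] k)
    (hp : ∀ h : H, p h = εR (act f h))
    (T : H →ₗ[k] (H →ₗ[k] k))
    (hT : ∀ h x : H, T h x = p (x * h))
    (P : Submodule k H)
    (hP : ∀ h : H, h ∈ P ↔ Coalgebra.comul (R := k) h = 1 ⊗ₜ[k] h + h ⊗ₜ[k] 1) :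
    Module.rank k (P.map T) ≤ (N : Cardinal) := by
  subst hI hI2 hdim
  refine Submodule.rank_le_finrank_of_le_range_dualMap (cotangentProj εR ∘ₗ act f) ?_
  rintro _ ⟨h, hh, rfl⟩
  obtain ⟨g, hg⟩ := (isPointDerivation_comp_act_of_primitive act hone hmeas εR
    ((hP h).1 hh)).exists_comp_cotangentProj
  refine ⟨g, LinearMap.ext fun x => ?_⟩
  rw [LinearMap.dualMap_apply', ← LinearMap.comp_assoc, hg, hT, hp, hassoc]
  rfl

/-- If `p(h) = ε_R(f · h)` for a right `H`-module algebra `R` with augmentation `ε_R`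
such that `dim (ker ε_R)/(ker ε_R)² = N`, then `P(H) ▷ p` has dimension at most `N`.
Here `T h = (x ↦ p (x * h))` is `h ↦ h ▷ p`, so `P.map T = P(H) ▷ p`. -/
theorem lie_rank_le_of_differentially_produced {k H R : Type*} [Field k] [CharZero k]
    [Ring H] [Bialgebra k H] [Ring R] [Algebra k R]
    (act : R →ₗ[k] H →ₗ[k] R)
    (hone : ∀ a, act a 1 = a)
    (hassoc : ∀ a h h', act a (h * h') = act (act a h) h')
    (hmeas : ∀ a b h, act (a * b) h =
      LinearMap.mul' k R (TensorProduct.map (act a) (act b) (Coalgebra.comul (R := k) h)))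
    (εR : R →ₐ[k] k)
    (I : Submodule k R) (hI : I = LinearMap.ker εR.toLinearMap)
    (I2 : Submodule k R)
    (hI2 : I2 = Submodule.span k {x : R | ∃ a ∈ I, ∃ b ∈ I, x = a * b})
    (N : ℕ)
    (hfin : Module.Finite k (I ⧸ Submodule.comap I.subtype I2))
    (hdim : Module.finrank k (I ⧸ Submodule.comap I.subtype I2) = N)
    (f : R) (p : H →ₗ[k] k)
    (hp : ∀ h : H, p h = εR (act f h))
    (T : H →ₗ[k] (H →ₗ[k] k))
    (hT : ∀ h x : H, T h x = p (x * h))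
    (P : Submodule k H)
    (hP : ∀ h : H, h ∈ P ↔ Coalgebra.comul (R := k) h = 1 ⊗ₜ[k] h + h ⊗ₜ[k] 1) :
    Module.rank k (P.map T) ≤ (N : Cardinal) :=
  lie_rank_le_of_differentially_produced_general act hone hassoc hmeas εR I hI I2 hI2 N hfin hdim f
    p hp T hT P hP
end

section
/- For iterated integrals defined by ξ̄_μ(t) = ∫_0^t u_{μ_1}(τ) ξ̄_{μ_2⋯μ_k}(τ) dτ (with ξ̄ of the empty word equal to the constant function 1), the pointwise product satisfies Chen's identity: ξ̄_λ(t) · ξ̄_μ(t) = Σ_{ν ∈ Sh(λ,μ)} ξ̄_ν(t), where the sum is over all shuffles of the words λ and μ. -/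
/-!
Both sides vanish at `t = 0` when the words are nonempty, so it suffices to compare
derivatives. By the product rule, `d/dt (ξ̄_{aλ} ξ̄_{bμ}) = u_a ξ̄_λ ξ̄_{bμ} + u_b ξ̄_{aλ} ξ̄_μ`, and by
induction on the lengths the two products on the right are the shuffle sums over `Sh(λ, bμ)` and
`Sh(aλ, μ)`; integrating, these give the shuffles of `aλ` and `bμ` that begin with `a` and with
`b`, respectively. For controls that are only continuous on `[0, T]`, extend them continuously to
`ℝ`: the iterated integrals on `[0, T]` do not change.
-/

/-- The multiset of all shuffles of two words (with multiplicity). -/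
def shuffle {X : Type*} : List X → List X → Multiset (List X)
  | [], l => {l}
  | l, [] => {l}
  | a :: as, b :: bs =>
      (shuffle as (b :: bs)).map (a :: ·) + (shuffle (a :: as) bs).map (b :: ·)
  termination_by l₁ l₂ => l₁.length + l₂.length

/-- The iterated integral `ξ̄_μ` associated to the word `μ` and the control
functions `u_i`: `ξ̄_∅ = 1` and `ξ̄_{μ₁⋯μ_k}(t) = ∫₀ᵗ u_{μ₁}(τ) ξ̄_{μ₂⋯μ_k}(τ) dτ`. -/
noncomputable def iteratedIntegral {M : ℕ} (u : Fin M → ℝ → ℝ) : List (Fin M) → ℝ → ℝ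
  | [], _ => 1
  | i :: μ, t => ∫ τ in (0 : ℝ)..t, u i τ * iteratedIntegral u μ τ

open Set

section Shuffle

variable {X : Type*}

@[simp]
lemma shuffle_nil_left (l : List X) : shuffle [] l = {l} := by
  cases l <;> simp [shuffle]

@[simp]
lemma shuffle_nil_right (l : List X) : shuffle l [] = {l} := by
  cases l <;> simp [shuffle]

lemma shuffle_cons_cons (a b : X) (as bs : List X) :
    shuffle (a :: as) (b :: bs) =
      (shuffle as (b :: bs)).map (a :: ·) + (shuffle (a :: as) bs).map (b :: ·) := by
  simp [shuffle]

end Shuffle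

namespace iteratedIntegral

variable {M : ℕ} {u : Fin M → ℝ → ℝ}

@[simp]
lemma nil (t : ℝ) : iteratedIntegral u [] t = 1 := rfl

lemma cons (i : Fin M) (μ : List (Fin M)) (t : ℝ) :
    iteratedIntegral u (i :: μ) t = ∫ τ in (0 : ℝ)..t, u i τ * iteratedIntegral u μ τ := rfl

@[simp]
lemma cons_zero (i : Fin M) (μ : List (Fin M)) :
    iteratedIntegral u (i :: μ) 0 = 0 := by
  simp [cons]

lemma eqOn_of_eqOn {v : Fin M → ℝ → ℝ} {T : ℝ} (huv : ∀ i, EqOn (u i) (v i) (Icc 0 T)) :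
    ∀ μ, EqOn (iteratedIntegral u μ) (iteratedIntegral v μ) (Icc 0 T)
  | [] => fun _ _ => rfl
  | i :: μ => fun t ht => by
    refine intervalIntegral.integral_congr fun τ hτ => ?_
    rw [uIcc_of_le ht.1] at hτ
    have hτ' : τ ∈ Icc 0 T := ⟨hτ.1, hτ.2.trans ht.2⟩
    simp only [huv i hτ', eqOn_of_eqOn huv μ hτ']

variable (hu : ∀ i, Continuous (u i))
include hu

lemma continuous : ∀ μ, Continuous (iteratedIntegral u μ)
  | [] => continuous_const
  | i :: μ => intervalIntegral.continuous_primitive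
      (fun _ _ => ((hu i).mul (continuous μ)).intervalIntegrable _ _) 0

lemma hasDerivAt_cons (i : Fin M) (μ : List (Fin M)) (t : ℝ) :
    HasDerivAt (iteratedIntegral u (i :: μ)) (u i t * iteratedIntegral u μ t) t :=
  ((hu i).mul (continuous hu μ)).integral_hasStrictDerivAt 0 t |>.hasDerivAt

lemma sum_map_cons (i : Fin M) (S : Multiset (List (Fin M))) (t : ℝ) :
    ((S.map (i :: ·)).map fun ν => iteratedIntegral u ν t).sum =
      ∫ τ in (0 : ℝ)..t, u i τ * (S.map fun ν => iteratedIntegral u ν τ).sum := by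
  induction S using Multiset.induction with
  | empty => simp
  | cons ν S ih =>
    have hsum : Continuous fun τ => (S.map fun ν => iteratedIntegral u ν τ).sum :=
      continuous_multiset_sum _ fun ν _ => continuous hu ν
    simp only [Multiset.map_cons, Multiset.sum_cons, ih, cons, mul_add]
    exact (intervalIntegral.integral_add (((hu i).mul (continuous hu ν)).intervalIntegrable _ _)
      (((hu i).mul hsum).intervalIntegrable _ _)).symm

lemma cons_mul_cons (a b : Fin M) (as bs : List (Fin M)) (t : ℝ) :
    iteratedIntegral u (a :: as) t * iteratedIntegral u (b :: bs) t =
      (∫ τ in (0 : ℝ)..t, u a τ * (iteratedIntegral u as τ * iteratedIntegral u (b :: bs) τ)) +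
        ∫ τ in (0 : ℝ)..t, u b τ * (iteratedIntegral u (a :: as) τ * iteratedIntegral u bs τ) := by
  have hderiv : ∀ τ, HasDerivAt
      (fun s => iteratedIntegral u (a :: as) s * iteratedIntegral u (b :: bs) s)
      (u a τ * (iteratedIntegral u as τ * iteratedIntegral u (b :: bs) τ) +
        u b τ * (iteratedIntegral u (a :: as) τ * iteratedIntegral u bs τ)) τ := fun τ =>
    ((hasDerivAt_cons hu a as τ).mul (hasDerivAt_cons hu b bs τ)).congr_deriv (by ring)
  have hcont (c : Fin M) (μ ν : List (Fin M)) :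
      Continuous fun τ => u c τ * (iteratedIntegral u μ τ * iteratedIntegral u ν τ) :=
    (hu c).mul ((continuous hu μ).mul (continuous hu ν))
  rw [← intervalIntegral.integral_add ((hcont _ _ _).intervalIntegrable _ _)
      ((hcont _ _ _).intervalIntegrable _ _),
    intervalIntegral.integral_eq_sub_of_hasDerivAt (fun τ _ => hderiv τ)
      (((hcont _ _ _).add (hcont _ _ _)).intervalIntegrable _ _)]
  simp

theorem mul_eq_sum_shuffle (l m : List (Fin M)) (t : ℝ) :
    iteratedIntegral u l t * iteratedIntegral u m t =
      ((shuffle l m).map fun ν => iteratedIntegral u ν t).sum := by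
  induction l generalizing m t with
  | nil => simp
  | cons a as ihl =>
    induction m generalizing t with
    | nil => simp
    | cons b bs ihm =>
      simp only [cons_mul_cons hu, shuffle_cons_cons, Multiset.map_add, Multiset.sum_add,
        sum_map_cons hu, ihl, ihm]

end iteratedIntegral

theorem chen_identity_general {M : ℕ} (T : ℝ) (u : Fin M → ℝ → ℝ)
    (hu : ∀ i, ContinuousOn (u i) (Set.Icc 0 T)) :
    ∀ (l m : List (Fin M)), ∀ t ∈ Set.Icc (0 : ℝ) T,
      iteratedIntegral u l t * iteratedIntegral u m t =
        ((shuffle l m).map fun ν => iteratedIntegral u ν t).sum := by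
  intro l m t ht
  have hT : (0 : ℝ) ≤ T := ht.1.trans ht.2
  let v : Fin M → ℝ → ℝ := fun i => IccExtend hT ((Icc 0 T).domRestrict (u i))
  have hv : ∀ i, Continuous (v i) := fun i => (hu i).domRestrict.Icc_extend'
  have huv : ∀ i, EqOn (u i) (v i) (Icc 0 T) := fun i τ hτ =>
    (IccExtend_of_mem hT ((Icc 0 T).domRestrict (u i)) hτ).symm
  have hagree := iteratedIntegral.eqOn_of_eqOn huv
  rw [hagree l ht, hagree m ht, Multiset.map_congr rfl fun ν _ => hagree ν ht]
  exact iteratedIntegral.mul_eq_sum_shuffle hv l m t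

/-- Chen's identity: the pointwise product of two iterated integrals is the sum of the
iterated integrals over all shuffles of the two words. -/
theorem chen_identity {M : ℕ} (T : ℝ) (hT : 0 ≤ T) (u : Fin M → ℝ → ℝ)
    (hu : ∀ i, ContinuousOn (u i) (Set.Icc 0 T)) :
    ∀ (l m : List (Fin M)), ∀ t ∈ Set.Icc (0 : ℝ) T,
      iteratedIntegral u l t * iteratedIntegral u m t =
        ((shuffle l m).map fun ν => iteratedIntegral u ν t).sum :=
  chen_identity_general T u hu
end

section
/- Let H be a bialgebra over a field k of characteristic 0 which is generated as an algebra by its primitive elements, and let p ∈ H*. If there exists a right H-module algebra R with an augmentation ε_R such that dim_k (Ker ε_R)/(Ker ε_R)² is finite and an element f ∈ R with p(h) = ε_R(f · h) for all h ∈ H, then p has finite Lie rank, i.e., the subspace { h ▷ p : h ∈ P(H) } of H* is finite-dimensional. -/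
open TensorProduct

/-!
A primitive `h` acts on `R` as a derivation, so `r ↦ ε_R (r · h)` is an `ε_R`-derivation
`R → k`. Such a derivation kills `k · 1 + I²`, where `I = ker ε_R`, and `R / (k · 1 + I²)` is a
quotient of `I / I²`, hence finite dimensional. Since `(h ▷ p)(x) = ε_R ((f · x) · h)`, every
`h ▷ p` with `h` primitive is the pullback along `x ↦ f · x` of a functional on this finite
dimensional quotient.
-/

section Measuring

variable {k H R : Type*} [CommSemiring k] [AddCommMonoid H] [Module k H] [Coalgebra k H] [One H]
  [Semiring R] [Algebra k R] {act : R →ₗ[k] H →ₗ[k] R} {h : H}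

theorem act_mul_of_comul_eq (hone : ∀ a, act a 1 = a)
    (hmeas : ∀ a b h, act (a * b) h =
      LinearMap.mul' k R (TensorProduct.map (act a) (act b) (Coalgebra.comul (R := k) h)))
    (hh : Coalgebra.comul (R := k) h = 1 ⊗ₜ[k] h + h ⊗ₜ[k] 1) (a b : R) :
    act (a * b) h = a * act b h + act a h * b := by
  simp [hmeas, hh, hone]

end Measuring

section Augmentation

variable {k R : Type*} [CommRing k] [Ring R] [Algebra k R]

theorem one_sup_ker_eq_top (ε : R →ₐ[k] k) :
    1 ⊔ LinearMap.ker ε.toLinearMap = ⊤ := by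
  refine eq_top_iff.mpr fun r _ => ?_
  have hr : r = ε r • (1 : R) + (r - ε r • 1) := by abel
  rw [hr]
  refine Submodule.add_mem_sup ?_ ?_
  · exact Submodule.smul_mem _ _ (Submodule.one_le.mp le_rfl)
  · simp

theorem one_sup_ker_mul_ker_le_ker_of_derivation (ε : R →ₐ[k] k) (D : R →ₗ[k] k)
    (hD : ∀ a b, D (a * b) = ε a * D b + D a * ε b) :
    1 ⊔ LinearMap.ker ε.toLinearMap * LinearMap.ker ε.toLinearMap ≤ LinearMap.ker D := by
  refine sup_le (Submodule.one_le.mpr ?_) (Submodule.mul_le.mpr fun a ha b hb => ?_)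
  · have h11 := hD 1 1
    simp only [mul_one, map_one, one_mul] at h11
    simpa using h11
  · simp only [LinearMap.mem_ker, AlgHom.toLinearMap_apply] at ha hb ⊢
    simp [hD, ha, hb]

end Augmentation

theorem Submodule.finite_quotient_sup_of_sup_eq_top {k V : Type*} [Ring k] [AddCommGroup V]
    [Module k V] {S I N : Submodule k V} (hSI : S ⊔ I = ⊤)
    [Module.Finite k (I ⧸ N.comap I.subtype)] : Module.Finite k (V ⧸ (S ⊔ N)) := by
  let φ := (N.comap I.subtype).liftQ ((S ⊔ N).mkQ ∘ₗ I.subtype) fun x hx => by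
    simpa using mem_sup_right (S := S) (mem_comap.mp hx)
  refine Module.Finite.of_surjective φ fun y => ?_
  obtain ⟨v, rfl⟩ := (S ⊔ N).mkQ_surjective y
  obtain ⟨s, hs, i, hi, rfl⟩ := mem_sup.mp (hSI ▸ mem_top : v ∈ S ⊔ I)
  refine ⟨Quotient.mk ⟨i, hi⟩, ?_⟩
  simpa [φ, Quotient.eq] using neg_mem (mem_sup_left hs)

theorem finite_lie_rank_of_differentially_produced_general {k H R : Type*} [Field k]
    [Ring H] [Bialgebra k H] [Ring R] [Algebra k R]
    (P : Submodule k H)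
    (hP : ∀ h : H, h ∈ P ↔ Coalgebra.comul (R := k) h = 1 ⊗ₜ[k] h + h ⊗ₜ[k] 1)
    (act : R →ₗ[k] H →ₗ[k] R)
    (hone : ∀ a, act a 1 = a)
    (hassoc : ∀ a h h', act a (h * h') = act (act a h) h')
    (hmeas : ∀ a b h, act (a * b) h =
      LinearMap.mul' k R (TensorProduct.map (act a) (act b) (Coalgebra.comul (R := k) h)))
    (εR : R →ₐ[k] k)
    (I : Submodule k R) (hI : I = LinearMap.ker εR.toLinearMap)
    (I2 : Submodule k R)
    (hI2 : I2 = Submodule.span k {x : R | ∃ a ∈ I, ∃ b ∈ I, x = a * b})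
    (hfin : Module.Finite k (I ⧸ Submodule.comap I.subtype I2))
    (f : R) (p : H →ₗ[k] k)
    (hp : ∀ h : H, p h = εR (act f h))
    (T : H →ₗ[k] (H →ₗ[k] k))
    (hT : ∀ h x : H, T h x = p (x * h)) :
    Module.Finite k (P.map T) := by
  have hI2_eq_mul : I2 = I * I := by
    rw [hI2, Submodule.mul_eq_span_mul_set]
    congr 1
    ext x
    simp [Set.mem_mul, eq_comm]
  subst hI hI2_eq_mul
  set J := 1 ⊔ LinearMap.ker εR.toLinearMap * LinearMap.ker εR.toLinearMap
  have : Module.Finite k (R ⧸ J) :=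
    Submodule.finite_quotient_sup_of_sup_eq_top (one_sup_ker_eq_top εR)
  refine Submodule.finiteDimensional_of_le
    (S₂ := LinearMap.range (LinearMap.lcomp k k (J.mkQ ∘ₗ act f))) ?_
  rintro - ⟨h, hh, rfl⟩
  have hJ : J ≤ LinearMap.ker (εR.toLinearMap ∘ₗ act.flip h) :=
    one_sup_ker_mul_ker_le_ker_of_derivation εR _ fun a b => by
      simp [act_mul_of_comul_eq hone hmeas ((hP h).mp hh)]
  refine ⟨J.liftQ _ hJ, LinearMap.ext fun x => ?_⟩
  simp [hT, hp, hassoc]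

/-- Let `H` be a primitively generated bialgebra over a field of characteristic `0`.
If `p ∈ H*` is differentially produced by a right `H`-module algebra `R` with
augmentation `ε_R` such that `(ker ε_R)/(ker ε_R)²` is finite dimensional, then `p`
has finite Lie rank: `P(H) ▷ p` is finite dimensional.  Here `T h = (x ↦ p (x * h))`
is `h ↦ h ▷ p`, so `P.map T = { h ▷ p : h ∈ P(H) }`. -/
theorem finite_lie_rank_of_differentially_produced {k H R : Type*} [Field k] [CharZero k]
    [Ring H] [Bialgebra k H] [Ring R] [Algebra k R]
    (P : Submodule k H)
    (hP : ∀ h : H, h ∈ P ↔ Coalgebra.comul (R := k) h = 1 ⊗ₜ[k] h + h ⊗ₜ[k] 1)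
    (hgen : Algebra.adjoin k (P : Set H) = ⊤)
    (act : R →ₗ[k] H →ₗ[k] R)
    (hone : ∀ a, act a 1 = a)
    (hassoc : ∀ a h h', act a (h * h') = act (act a h) h')
    (hmeas : ∀ a b h, act (a * b) h =
      LinearMap.mul' k R (TensorProduct.map (act a) (act b) (Coalgebra.comul (R := k) h)))
    (εR : R →ₐ[k] k)
    (I : Submodule k R) (hI : I = LinearMap.ker εR.toLinearMap)
    (I2 : Submodule k R)
    (hI2 : I2 = Submodule.span k {x : R | ∃ a ∈ I, ∃ b ∈ I, x = a * b})
    (hfin : Module.Finite k (I ⧸ Submodule.comap I.subtype I2))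
    (f : R) (p : H →ₗ[k] k)
    (hp : ∀ h : H, p h = εR (act f h))
    (T : H →ₗ[k] (H →ₗ[k] k))
    (hT : ∀ h x : H, T h x = p (x * h)) :
    Module.Finite k (P.map T) :=
  finite_lie_rank_of_differentially_produced_general P hP act hone hassoc hmeas εR I hI I2 hI2 hfin
    f p hp T hT
end

section
/- Let H = k{LT(E_1,…,E_M)} be the Grossman–Larson Hopf algebra of labeled rooted trees with coproduct Δ(t) = Σ_{P ⊆ C_t} t_P ⊗ t_{C_t∖P}, where C_t is the set of children of the root of t and t_P is the tree formed by attaching the subtrees rooted at the elements of P to a new root. Then the labeled trees whose root has exactly one child are exactly the tree basis elements that are primitive, and they form a basis of the space P(H) of primitive elements. -/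
open TensorProduct

/-- A finite rooted tree whose every node carries a label from `L`.  A
Grossman–Larson tree is presented by the multiset of subtrees hanging off its
(unlabeled) root, i.e. an element of `Multiset (LabTree L)`; thus every non-root node
of the whole tree is labeled, and the empty multiset is the single-node tree. -/
inductive LabTree (L : Type*) : Type _
  | node : L → List (LabTree L) → LabTree L

/-- The Grossman–Larson coproduct on the free vector space on forests:
`Δ(t) = Σ_{P ⊆ C_t} t_P ⊗ t_{C_t∖P}`, the sum over all subsets of the children of the
root (for a multiset of children this is the sum over the antidiagonal, which counts
each splitting with the correct multiplicity), extended linearly. -/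
noncomputable def glComul {k : Type*} [Field k] {L : Type*}
    (f : Multiset (LabTree L) →₀ k) :
    TensorProduct k (Multiset (LabTree L) →₀ k) (Multiset (LabTree L) →₀ k) :=
  f.sum fun F x => x •
    ((F.antidiagonal).map fun p =>
      Finsupp.single p.1 (1 : k) ⊗ₜ[k] Finsupp.single p.2 (1 : k)).sum

/-! Identify `H ⊗ H` with `Multiset (LabTree L) × Multiset (LabTree L) →₀ k`. The coefficient of
`(A, B)` in `Δ f` is `f (A + B)` times the number of ways `(A, B)` occurs in the antidiagonal of
`A + B`, a positive integer, hence nonzero in characteristic `0`. For a primitive `f` the same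
coefficient of `1 ⊗ f + f ⊗ 1` is `[A = 0] f B + [B = 0] f A`: at `A = B = 0` this forces
`f 0 = 0`, and at `A = {t}`, `B ≠ 0` it forces `f (t ::ₘ B) = 0`. So primitives are supported on
one-child forests; conversely every one-child tree is primitive, and primitives form a subspace. -/

theorem Multiset.sum_map_single_one_apply {α R : Type*} [DecidableEq α] [AddCommMonoidWithOne R]
    (m : Multiset α) (a : α) : (m.map fun x => Finsupp.single x (1 : R)).sum a = m.count a := by
  induction m using Multiset.induction with
  | empty => simp
  | cons x m ih =>
    obtain rfl | h := eq_or_ne x a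
    · simp [ih, add_comm]
    · simp [h.symm, ih]

namespace LabTree

open Finsupp

variable {k : Type*} [Field k] {L : Type*}

variable (k L) in
noncomputable def glComulₗ : (Multiset (LabTree L) →₀ k) →ₗ[k]
    (Multiset (LabTree L) →₀ k) ⊗[k] (Multiset (LabTree L) →₀ k) :=
  linearCombination k fun F =>
    (F.antidiagonal.map fun p => single p.1 (1 : k) ⊗ₜ[k] single p.2 (1 : k)).sum

theorem glComulₗ_apply (f : Multiset (LabTree L) →₀ k) : glComulₗ k L f = glComul f := rfl

variable (k L) in
noncomputable def primitives : Submodule k (Multiset (LabTree L) →₀ k) :=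
  let η : Multiset (LabTree L) →₀ k := single 0 1
  (glComulₗ k L).eqLocus (TensorProduct.mk k _ _ η + (TensorProduct.mk k _ _).flip η)

theorem mem_primitives {f : Multiset (LabTree L) →₀ k} :
    f ∈ primitives k L ↔ glComul f = single 0 1 ⊗ₜ[k] f + f ⊗ₜ[k] single 0 1 := by
  simp [primitives, glComulₗ_apply]

open scoped Classical in
theorem finsuppTensorFinsupp'_glComul_single (F A B : Multiset (LabTree L)) :
    finsuppTensorFinsupp' k _ _ (glComul (single F (1 : k))) (A, B) =
      F.antidiagonal.count (A, B) := by
  rw [glComul, sum_single_index (by simp), one_smul, map_multiset_sum, Multiset.map_map]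
  simpa [finsuppTensorFinsupp'_single_tmul_single] using
    Multiset.sum_map_single_one_apply (R := k) F.antidiagonal (A, B)

open scoped Classical in
theorem finsuppTensorFinsupp'_glComul (f : Multiset (LabTree L) →₀ k) (A B : Multiset (LabTree L)) :
    finsuppTensorFinsupp' k _ _ (glComul f) (A, B) =
      f (A + B) * (A + B).antidiagonal.count (A, B) := by
  induction f using Finsupp.induction_linear with
  | zero => simp [← glComulₗ_apply]
  | add f g hf hg =>
    rw [← glComulₗ_apply, map_add, map_add, Finsupp.add_apply, glComulₗ_apply, glComulₗ_apply,
      hf, hg, Finsupp.add_apply, add_mul]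
  | single F c =>
    rw [← smul_single_one, ← glComulₗ_apply, map_smul, map_smul, glComulₗ_apply,
      Finsupp.smul_apply, finsuppTensorFinsupp'_glComul_single]
    rcases eq_or_ne F (A + B) with rfl | hF
    · simp
    · have : (A, B) ∉ F.antidiagonal := by rw [Multiset.mem_antidiagonal]; exact Ne.symm hF
      simp [Multiset.count_eq_zero_of_notMem this, hF]

open scoped Classical in
theorem card_eq_one_of_mem_primitives [CharZero k] {f : Multiset (LabTree L) →₀ k}
    (hf : f ∈ primitives k L) {F : Multiset (LabTree L)} (hF : f F ≠ 0) :
    Multiset.card F = 1 := by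
  have coeff (A B : Multiset (LabTree L)) : f (A + B) * (A + B).antidiagonal.count (A, B) =
      (if A = 0 then f B else 0) + (if B = 0 then f A else 0) := by
    have := congrArg (fun x => finsuppTensorFinsupp' k _ _ x (A, B)) (mem_primitives.1 hf)
    simpa [finsuppTensorFinsupp'_glComul, single_apply, eq_comm] using this
  induction F using Multiset.induction with
  | empty =>
    have h := coeff 0 0
    simp only [add_zero, Multiset.antidiagonal_zero, Multiset.count_singleton_self, Nat.cast_one,
      mul_one, if_pos, left_eq_add] at h
    exact absurd h hF
  | cons t B _ =>
    obtain rfl | hB := eq_or_ne B 0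
    · simp
    · have hpos : 0 < ({t} + B).antidiagonal.count ({t}, B) :=
        Multiset.count_pos.2 (Multiset.mem_antidiagonal.2 rfl)
      have h := coeff {t} B
      rw [if_neg (Multiset.singleton_ne_zero t), if_neg hB, add_zero, mul_eq_zero, Nat.cast_eq_zero,
        or_iff_left hpos.ne', Multiset.singleton_add] at h
      exact absurd h hF

theorem single_singleton_mem_primitives (t : LabTree L) :
    single {t} (1 : k) ∈ primitives k L := by
  rw [mem_primitives, glComul, sum_single_index (by simp), one_smul,
    ← Multiset.cons_zero, Multiset.antidiagonal_cons]
  simp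

theorem span_range_single_singleton :
    Submodule.span k (Set.range fun t : LabTree L => single ({t} : Multiset (LabTree L)) (1 : k)) =
      supported k k {F | Multiset.card F = 1} := by
  rw [supported_eq_span_single]
  congr 1
  ext
  simp [Multiset.card_eq_one]

theorem primitives_eq_supported [CharZero k] :
    primitives k L = supported k k {F | Multiset.card F = 1} := by
  refine le_antisymm (fun f hf => (mem_supported k f).2 fun F hF =>
    card_eq_one_of_mem_primitives hf (mem_support_iff.1 hF)) ?_
  rw [← span_range_single_singleton, Submodule.span_le]
  rintro _ ⟨t, rfl⟩
  exact single_singleton_mem_primitives t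

end LabTree

/-- In the Grossman–Larson Hopf algebra of labeled rooted trees over a field of
characteristic `0`, a tree basis element is primitive exactly when its root has
exactly one child, and the single-child trees form a basis of the space of
primitive elements `P(H)`. -/
theorem glPrimitives {k : Type*} [Field k] [CharZero k] (M : ℕ) :
    (∀ F : Multiset (LabTree (Fin M)),
      glComul (Finsupp.single F (1 : k)) =
          Finsupp.single (0 : Multiset (LabTree (Fin M))) (1 : k) ⊗ₜ[k]
              Finsupp.single F (1 : k) +
            Finsupp.single F (1 : k) ⊗ₜ[k]
              Finsupp.single (0 : Multiset (LabTree (Fin M))) (1 : k) ↔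
        Multiset.card F = 1) ∧
    LinearIndependent k
      (fun t : LabTree (Fin M) =>
        Finsupp.single ({t} : Multiset (LabTree (Fin M))) (1 : k)) ∧
    (∀ f : Multiset (LabTree (Fin M)) →₀ k,
      glComul f =
          Finsupp.single (0 : Multiset (LabTree (Fin M))) (1 : k) ⊗ₜ[k] f +
            f ⊗ₜ[k] Finsupp.single (0 : Multiset (LabTree (Fin M))) (1 : k) ↔
        f ∈ Submodule.span k
          (Set.range fun t : LabTree (Fin M) =>
            Finsupp.single ({t} : Multiset (LabTree (Fin M))) (1 : k))) := by
  refine ⟨fun F => ?_, ?_, fun f => ?_⟩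
  · rw [← LabTree.mem_primitives, LabTree.primitives_eq_supported, Finsupp.mem_supported,
      Finsupp.support_single _ one_ne_zero, Finset.coe_singleton,
      Set.singleton_subset_iff, Set.mem_ofPred_eq]
  · exact (Finsupp.linearIndependent_single_one k _).comp _ fun _ _ => Multiset.singleton_inj.1
  · rw [← LabTree.mem_primitives, LabTree.primitives_eq_supported,
      LabTree.span_range_single_singleton]
end
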